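/- arXiv:2601.17603 — 3 statements merged into one kernel-verified Lean document; each statement's English description precedes it below -/
import Mathlib

section
/- Let λ and μ be partitions of m and let n₀, n ∈ N(m) with n₀ < n. If λ and μ are n₀-similar (i.e. V^{n₀}(λ, μ) ≠ ∅), then they are also n-similar (V^n(λ, μ) ≠ ∅). -/
open scoped BigOperators Classical

noncomputable section

/-! ### Boxes and strips -/

/-- `boxNE B B'` : the box `B'` lies weakly north and strictly east of the box `B`
(boxes are `(row, column)` pairs). -/
def boxNE (B B' : ℕ × ℕ) : Prop := B'.1 ≤ B.1 ∧ B.2 < B'.2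

/-- `HStrip μ ν` : `μ ⊆ ν` and the skew shape `ν \ μ` is a horizontal strip, i.e. it has
at most one box in every column. -/
def HStrip (μ ν : YoungDiagram) : Prop :=
  μ ≤ ν ∧ ∀ i₁ i₂ j : ℕ, (i₁, j) ∈ ν → (i₁, j) ∉ μ → (i₂, j) ∈ ν → (i₂, j) ∉ μ → i₁ = i₂

/-- `VStrip μ ν` : `μ ⊆ ν` and the skew shape `ν \ μ` is a vertical strip, i.e. it has
at most one box in every row. -/
def VStrip (μ ν : YoungDiagram) : Prop :=
  μ ≤ ν ∧ ∀ i j₁ j₂ : ℕ, (i, j₁) ∈ ν → (i, j₁) ∉ μ → (i, j₂) ∈ ν → (i, j₂) ∉ μ → j₁ = j₂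

/-- `ν` is obtained from `μ` by adding exactly one box. -/
def YCovers (μ ν : YoungDiagram) : Prop := μ ≤ ν ∧ ν.card = μ.card + 1

/-! ### Semistandard oscillating tableaux (SSOT)

An SSOT `S = (S^1, S'^2, S^2, …, S'^k, S^k)` is encoded by the number of steps `k`,
the partitions `A i = S^i` and `D i = S'^i` (with the conventions `A 0 = D 0 = D 1 = ∅`
and `A i = D (i+1) = S^k` for `i ≥ k`, i.e. the sequence is continued by the final
shape forever, and the last step is required to be nontrivial so that the number of
steps is well defined). -/

structure SSOT where
  steps : ℕ
  A : ℕ → YoungDiagram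
  D : ℕ → YoungDiagram
  hA0 : A 0 = ⊥
  hD0 : D 0 = ⊥
  hD1 : D 1 = ⊥
  stableA : ∀ i, steps ≤ i → A i = A steps
  stableD : ∀ i, steps < i → D i = A steps
  strip_del : ∀ i, 1 ≤ i → HStrip (D (i + 1)) (A i)
  strip_add : ∀ i, 2 ≤ i → HStrip (D i) (A i)
  minimal : steps ≠ 0 → ¬(D steps = A steps ∧ A steps = A (steps - 1))

namespace SSOT

/-- The shape of an SSOT. -/
def shape (S : SSOT) : YoungDiagram := S.A S.steps

/-- The multiplicity of the letter `i` in the content `‖S‖`, namely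
`|S^{i-1} \ S'^i| + |S^i \ S'^i|`. -/
def mult (S : SSOT) (i : ℕ) : ℕ :=
  if i = 0 then 0 else ((S.A (i - 1)).card - (S.D i).card) + ((S.A i).card - (S.D i).card)

/-- The length of an SSOT. -/
def length (S : SSOT) : ℕ := ∑ i ∈ Finset.range (S.steps + 1), S.mult i

/-- The weight of an SSOT, as a finitely supported exponent vector; the variable with
index `j` records the letter `j + 1`. -/
def wt (S : SSOT) : ℕ →₀ ℕ := ∑ i ∈ Finset.range S.steps, Finsupp.single i (S.mult (i + 1))

/-- `com S` : the weight vector of the profile of `S`, as a weak composition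
(the `i`-th entry is the number of letters equal to `i+1` in the profile). -/
def comList (S : SSOT) : List ℕ := (List.range S.steps).map fun i => S.mult (i + 1)

/-- `cum S i` : the position in the profile of `S` after all letters `≤ i`. -/
def cum (S : SSOT) (i : ℕ) : ℕ := ∑ j ∈ Finset.range (i + 1), S.mult j

/-- number of deletion substeps of step `i`, namely `|S^{i-1} \ S'^i|`. -/
def delc (S : SSOT) (i : ℕ) : ℕ := (S.A (i - 1)).card - (S.D i).card

/-- The letter occupying position `m` (for `1 ≤ m ≤ length`) of the profile of `S`. -/
def letterOf (S : SSOT) (m : ℕ) : ℕ := sInf {i | m ≤ S.cum i}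

end SSOT

/-- The exponent vector associated to a weak composition. -/
def listWt (c : List ℕ) : ℕ →₀ ℕ :=
  ∑ i ∈ Finset.range c.length, Finsupp.single i (c.getD i 0)

/-- The SSOT function `ss_{λ,n}` : the generating function `∑_{S ∈ SSOT_n(λ)} x^S`,
defined coefficientwise. -/
def ssotFun (l : YoungDiagram) (n : ℕ) : MvPowerSeries ℕ ℤ :=
  fun d => (Nat.card {S : SSOT // S.shape = l ∧ S.length = n ∧ S.wt = d} : ℤ)

/-- The SSOT function with rational coefficients. -/
def ssotFunQ (l : YoungDiagram) (n : ℕ) : MvPowerSeries ℕ ℚ :=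
  fun d => (Nat.card {S : SSOT // S.shape = l ∧ S.length = n ∧ S.wt = d} : ℚ)

/-- The SSOT function with complex coefficients. -/
def ssotFunC (l : YoungDiagram) (n : ℕ) : MvPowerSeries ℕ ℂ :=
  fun d => (Nat.card {S : SSOT // S.shape = l ∧ S.length = n ∧ S.wt = d} : ℂ)

/-- The full SSOT function `ss_λ = ∑_n ss_{λ,n}`. -/
def ssotFull (l : YoungDiagram) : MvPowerSeries ℕ ℤ :=
  fun d => (Nat.card {S : SSOT // S.shape = l ∧ S.wt = d} : ℤ)

/-- Setting the variables `x_{k+1} = x_{k+2} = ⋯ = 0` in a power series: only monomials in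
the first `k` variables survive. -/
def restrictVars (k : ℕ) (f : MvPowerSeries ℕ ℤ) : MvPowerSeries ℕ ℤ :=
  fun d => if ∀ i ∈ d.support, i < k then MvPowerSeries.coeff d f else 0

/-! ### Quasisymmetric functions -/

/-- A strong composition: all parts are positive. -/
def StrongComp (a : List ℕ) : Prop := ∀ x ∈ a, 0 < x

/-- `Refines b a` : the parts of `b` can be grouped into consecutive blocks whose sums
are the parts of `a`, in order. -/
def Refines (b a : List ℕ) : Prop :=
  ∃ L : List (List ℕ), L.flatten = b ∧ L.map List.sum = a

/-- The values of a finitely supported exponent vector, listed with variable indices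
increasing. -/
def sortedVals (d : ℕ →₀ ℕ) : List ℕ := (d.support.sort (· ≤ ·)).map fun i => d i

/-- The monomial quasisymmetric function `M_b`. -/
def monQSym (b : List ℕ) : MvPowerSeries ℕ ℤ :=
  fun d => if sortedVals d = b then 1 else 0

/-- Gessel's fundamental quasisymmetric function `F_a = ∑_{b ∈ ref(a)} M_b`. -/
def fundQSym (a : List ℕ) : MvPowerSeries ℕ ℤ :=
  ∑ᶠ b ∈ {b : List ℕ | StrongComp b ∧ Refines b a}, monQSym b

/-! ### Oscillating tableaux and descent compositions -/

/-- An oscillating tableau of shape `l` and length `n` : a sequence of partitions starting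
at `∅`, ending at `l` (where it stays forever), with consecutive terms differing by one box. -/
def IsOT (O : ℕ → YoungDiagram) (n : ℕ) (l : YoungDiagram) : Prop :=
  O 0 = ⊥ ∧ (∀ j, n ≤ j → O j = l) ∧
    ∀ j, j < n → YCovers (O j) (O (j + 1)) ∨ YCovers (O (j + 1)) (O j)

/-- Move `j` (from `O (j-1)` to `O j`) is an addition. -/
def IsAdd (O : ℕ → YoungDiagram) (j : ℕ) : Prop := O (j - 1) ≤ O j

/-- Position `j` is a descent of the oscillating tableau `O` : a maximal
(deletions-then-additions) segment ends at `j`.  This happens exactly when move `j+1` is a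
deletion following an addition, or two consecutive additions break the strictly-increasing
northeast order, or two consecutive deletions break the strictly-decreasing northeast order. -/
def IsDescent (O : ℕ → YoungDiagram) (j : ℕ) : Prop :=
  (IsAdd O j ∧ ¬ IsAdd O (j + 1)) ∨
  (IsAdd O j ∧ IsAdd O (j + 1) ∧
    ∃ B B' : ℕ × ℕ, B ∈ O j ∧ B ∉ O (j - 1) ∧ B' ∈ O (j + 1) ∧ B' ∉ O j ∧ ¬ boxNE B B') ∨
  (¬ IsAdd O j ∧ ¬ IsAdd O (j + 1) ∧
    ∃ B B' : ℕ × ℕ, B ∈ O (j - 1) ∧ B ∉ O j ∧ B' ∈ O j ∧ B' ∉ O (j + 1) ∧ ¬ boxNE B' B)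

/-- The descent set `Des O ⊆ {1, …, n-1}` of an oscillating tableau of length `n`. -/
def DesSet (O : ℕ → YoungDiagram) (n : ℕ) : Finset ℕ :=
  (Finset.Ico 1 n).filter (IsDescent O)

/-- successive differences of a list. -/
def diffs (L : List ℕ) : List ℕ := (L.zip (0 :: L)).map fun p => p.1 - p.2

/-- The descent composition `des O = (d₁ - d₀, …, d_k - d_{k-1})` of an oscillating tableau
of length `n`, where `Des O = {d₁ < ⋯ < d_{k-1}}`, `d₀ = 0` and `d_k = n`. -/
def desComp (O : ℕ → YoungDiagram) (n : ℕ) : List ℕ :=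
  if n = 0 then [] else diffs ((DesSet O n ∪ {n}).sort (· ≤ ·))

/-! ### Standardization -/

/-- `IsStd S O` : the oscillating tableau `O` is the standardization of the SSOT `S`;
the substeps of step `i` of `S` occupy the positions in `(cum S (i-1), cum S i]`,
first the deletions (from `S^{i-1}` down to `S'^i`, boxes strictly decreasing in the
northeast order, i.e. removed from right to left), then the additions (from `S'^i` up to
`S^i`, boxes strictly increasing in the northeast order, i.e. added from left to right). -/
def IsStd (S : SSOT) (O : ℕ → YoungDiagram) : Prop :=
  (∀ j, S.length ≤ j → O j = S.shape) ∧
  (∀ i, O (S.cum i) = S.A i) ∧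
  (∀ i, 1 ≤ i → O (S.cum (i - 1) + S.delc i) = S.D i) ∧
  (∀ i m, 1 ≤ i → S.cum (i - 1) < m → m ≤ S.cum (i - 1) + S.delc i →
    YCovers (O m) (O (m - 1))) ∧
  (∀ i m, 1 ≤ i → S.cum (i - 1) + S.delc i < m → m ≤ S.cum i →
    YCovers (O (m - 1)) (O m)) ∧
  (∀ i m, 1 ≤ i → S.cum (i - 1) < m → m + 1 ≤ S.cum (i - 1) + S.delc i →
    ∀ B B' : ℕ × ℕ, B ∈ O (m - 1) → B ∉ O m → B' ∈ O m → B' ∉ O (m + 1) → boxNE B' B) ∧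
  (∀ i m, 1 ≤ i → S.cum (i - 1) + S.delc i < m → m + 1 ≤ S.cum i →
    ∀ B B' : ℕ × ℕ, B ∈ O m → B ∉ O (m - 1) → B' ∈ O (m + 1) → B' ∉ O m → boxNE B B')

/-- An SSOT is quasi-Yamanouchi if its weight vector equals its descent composition. -/
def IsQY (S : SSOT) : Prop :=
  ∃ O : ℕ → YoungDiagram, IsStd S O ∧ S.comList = desComp O S.length

/-! ### Semistandard Young tableaux, column insertion, the Sundaram construction -/

/-- `f` is (the entry function of) a semistandard Young tableau of shape `μ`, with positive
integer entries: rows weakly increase, columns strictly increase, entries vanish outside `μ`. -/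
def IsSsytOn (μ : YoungDiagram) (f : ℕ → ℕ → ℕ) : Prop :=
  (∀ i j₁ j₂, j₁ ≤ j₂ → (i, j₂) ∈ μ → f i j₁ ≤ f i j₂) ∧
  (∀ i₁ i₂ j, i₁ < i₂ → (i₂, j) ∈ μ → f i₁ j < f i₂ j) ∧
  (∀ i j, (i, j) ∉ μ → f i j = 0) ∧
  (∀ i j, (i, j) ∈ μ → 0 < f i j)

/-- The set of semistandard Young tableaux of shape `l`. -/
def SSYTPos (l : YoungDiagram) := {f : ℕ → ℕ → ℕ // IsSsytOn l f}

/-- `ColIns f μ v g ν` : column-inserting the value `v` into the tableau `f` of shape `μ`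
produces the tableau `g` of shape `ν` (one more box): `v` is inserted in column `0`, where it
replaces the topmost entry `≥ v` (which is bumped into the next column, and so on); in the
final column `cmax` the incoming value is strictly larger than all entries and is appended
at the bottom, creating the new box. -/
def ColIns (f : ℕ → ℕ → ℕ) (μ : YoungDiagram) (v : ℕ) (g : ℕ → ℕ → ℕ) (ν : YoungDiagram) :
    Prop :=
  μ ≤ ν ∧ ν.card = μ.card + 1 ∧
  ∃ (cmax : ℕ) (w rr : ℕ → ℕ),
    w 0 = v ∧
    (∀ j, j < cmax →
      (rr j, j) ∈ μ ∧ w j ≤ f (rr j) j ∧ (∀ i, i < rr j → f i j < w j) ∧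
      w (j + 1) = f (rr j) j ∧ g (rr j) j = w j) ∧
    (∀ i, (i, cmax) ∈ μ → f i cmax < w cmax) ∧
    (rr cmax, cmax) ∉ μ ∧ (rr cmax, cmax) ∈ ν ∧ g (rr cmax) cmax = w cmax ∧
    (∀ i j, ¬(j ≤ cmax ∧ i = rr j) → g i j = f i j)

/-- The Sundaram construction along an SSOT `S` with standardization `O`: a sequence of
semistandard Young tableaux `T m` of shape `O m`; at an addition substep the new box receives
the current letter of `S`; at a deletion substep the entry in the removed box is
column-unbumped, ejecting the value `v m` (equivalently, column-inserting `v m` into `T m`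
recovers `T (m-1)`). -/
def SundaramBuild (S : SSOT) (O : ℕ → YoungDiagram) (T : ℕ → ℕ → ℕ → ℕ) (v : ℕ → ℕ) : Prop :=
  (∀ i j, T 0 i j = 0) ∧
  (∀ m, IsSsytOn (O m) (T m)) ∧
  (∀ m, 1 ≤ m → m ≤ S.length →
    (YCovers (O (m - 1)) (O m) →
      (∀ B : ℕ × ℕ, B ∈ O m → B ∉ O (m - 1) → T m B.1 B.2 = S.letterOf m) ∧
      (∀ i j : ℕ, ((i, j) ∈ O m → (i, j) ∈ O (m - 1)) → T m i j = T (m - 1) i j)) ∧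
    (YCovers (O m) (O (m - 1)) →
      ColIns (T m) (O m) (v m) (T (m - 1)) (O (m - 1))))

/-- A Burge (two-row, lexicographic, column-strict) array, stored as the list of its
columns `(top, bottom)`. -/
structure BurgeArray where
  cols : List (ℕ × ℕ)
  pos : ∀ p ∈ cols, 0 < p.2
  burge : ∀ p ∈ cols, p.2 < p.1
  lex : cols.Chain' fun p q => p.1 < q.1 ∨ (p.1 = q.1 ∧ p.2 ≤ q.2)

/-- The two-row array recorded by the Sundaram construction: the pairs
`(letter, ejected value)` at the deletion substeps, in order. -/
def delList (S : SSOT) (O : ℕ → YoungDiagram) (v : ℕ → ℕ) : List (ℕ × ℕ) :=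
  (((List.range (S.length + 1)).filter fun m =>
      decide (1 ≤ m ∧ YCovers (O m) (O (m - 1))))).map fun m => (S.letterOf m, v m)

/-- The weight of (the entry function of) a tableau of shape `l`; the variable with
index `j` records the entry `j + 1`. -/
def tabWt (l : YoungDiagram) (f : ℕ → ℕ → ℕ) : ℕ →₀ ℕ :=
  ∑ c ∈ l.cells, Finsupp.single (f c.1 c.2 - 1) 1

/-- The Schur function `s_l`, as the generating function of semistandard Young tableaux
of shape `l`, defined coefficientwise. -/
def schur (l : YoungDiagram) : MvPowerSeries ℕ ℤ :=
  fun d => (Nat.card {T : SSYTPos l // tabWt l T.1 = d} : ℤ)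

/-- The Schur function with rational coefficients. -/
def schurQ (l : YoungDiagram) : MvPowerSeries ℕ ℚ :=
  fun d => (Nat.card {T : SSYTPos l // tabWt l T.1 = d} : ℚ)

/-- The expansion of the product `∏_{i<j} (1 - x_i x_j)` : the coefficient of a monomial is
the signed count of the sets of pairs `i < j` summing to its exponent vector. -/
def littlewoodProd : MvPowerSeries ℕ ℤ :=
  fun d => ∑ᶠ F ∈ {F : Finset (ℕ × ℕ) | (∀ p ∈ F, p.1 < p.2) ∧
      (∑ p ∈ F, (Finsupp.single p.1 1 + Finsupp.single p.2 1)) = d},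
    ((-1 : ℤ) ^ F.card)

/-! ### Vertical strip closures, dominance, special shapes -/

/-- Every column of `β` has even length, i.e. the conjugate partition `β'` is even. -/
def EvenConj (β : YoungDiagram) : Prop := ∀ j, Even (β.colLen j)

/-- `VReach μ ν` : `ν` is obtained from `μ` by successively adding vertical strips of even
size. -/
inductive VReach : YoungDiagram → YoungDiagram → Prop
  | refl (μ : YoungDiagram) : VReach μ μ
  | step {μ ν ρ : YoungDiagram} : VReach μ ν → VStrip ν ρ → Even (ρ.card - ν.card) →
      VReach μ ρ

/-- Dominance order: `Dom μ ν` means `ν ≤ μ`, i.e. all partial sums of the parts of `ν`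
are at most those of `μ`. -/
def Dom (μ ν : YoungDiagram) : Prop :=
  ∀ i, ∑ j ∈ Finset.range i, ν.rowLen j ≤ ∑ j ∈ Finset.range i, μ.rowLen j

/-- The square Young diagram with `m` rows of length `m`. -/
def squareYD (m : ℕ) : YoungDiagram where
  cells := Finset.range m ×ˢ Finset.range m
  isLowerSet := by
    rintro ⟨a1, a2⟩ ⟨b1, b2⟩ ⟨h1, h2⟩ ha
    simp only [Finset.coe_product, Set.mem_prod, Finset.mem_coe, Finset.mem_range] at ha ⊢
    omega

/-- The partition `λ̄ = (λ₁ + r, λ₂ + r, λ₃, …, λ_l)`. -/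
def barYD (l : YoungDiagram) (r : ℕ) : YoungDiagram where
  cells :=
    (l.cells.filter fun c => 2 ≤ c.1) ∪
      ({0} : Finset ℕ) ×ˢ Finset.range (l.rowLen 0 + r) ∪
      ({1} : Finset ℕ) ×ˢ Finset.range (l.rowLen 1 + r)
  isLowerSet := by
    have h01 : l.rowLen 1 ≤ l.rowLen 0 := l.rowLen_anti 0 1 (by omega)
    rintro ⟨a1, a2⟩ ⟨b1, b2⟩ ⟨h1, h2⟩ ha
    simp only [Finset.coe_union, Set.mem_union, Finset.mem_coe, Finset.mem_filter,
      Finset.mem_product, Finset.mem_singleton, Finset.mem_range] at ha ⊢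
    rcases ha with ((⟨hmem, hge⟩ | ⟨ha1, ha2⟩) | ⟨ha1, ha2⟩)
    · have hlt : a2 < l.rowLen a1 := YoungDiagram.mem_iff_lt_rowLen.mp
        (by simpa using hmem)
      rcases Nat.lt_or_ge b1 2 with hb | hb
      · have h1a : l.rowLen a1 ≤ l.rowLen 1 := l.rowLen_anti 1 a1 (by omega)
        rcases Nat.lt_or_ge b1 1 with hb0 | hb1
        · exact Or.inl (Or.inr ⟨by omega, by omega⟩)
        · exact Or.inr ⟨by omega, by omega⟩
      · refine Or.inl (Or.inl ⟨?_, by omega⟩)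
        have := l.isLowerSet (a := (a1, a2)) (b := (b1, b2)) ⟨h1, h2⟩ (by simpa using hmem)
        simpa using this
    · exact Or.inl (Or.inr ⟨by omega, by omega⟩)
    · rcases Nat.lt_or_ge b1 1 with hb0 | hb1
      · exact Or.inl (Or.inr ⟨by omega, by omega⟩)
      · exact Or.inr ⟨by omega, by omega⟩

end

/-- Add `k` boxes at the bottom of column `0`. -/
def addCol0 (ν : YoungDiagram) (k : ℕ) : YoungDiagram where
  cells := ν.cells ∪ (Finset.range (ν.colLen 0 + k)) ×ˢ {0}
  isLowerSet := by
    rintro ⟨a1, a2⟩ ⟨b1, b2⟩ ⟨h1, h2⟩ ha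
    simp only [Finset.coe_union, Set.mem_union, Finset.mem_coe, Finset.mem_product,
      Finset.mem_range, Finset.mem_singleton] at ha ⊢
    rcases ha with ha | ⟨ha1, ha2⟩
    · exact Or.inl (ν.isLowerSet (a := (a1, a2)) (b := (b1, b2)) ⟨h1, h2⟩ (by simpa using ha))
    · exact Or.inr ⟨by omega, by omega⟩

lemma mem_addCol0 {ν : YoungDiagram} {k i j : ℕ} :
    (i, j) ∈ addCol0 ν k ↔ (i, j) ∈ ν ∨ (i < ν.colLen 0 + k ∧ j = 0) := by
  show (i, j) ∈ ν.cells ∪ _ ↔ _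
  simp only [Finset.mem_union, Finset.mem_product, Finset.mem_range, Finset.mem_singleton,
    YoungDiagram.mem_cells]

lemma le_addCol0 (ν : YoungDiagram) (k : ℕ) : ν ≤ addCol0 ν k := by
  intro c hc
  rcases c with ⟨i, j⟩
  exact mem_addCol0.mpr (Or.inl hc)

lemma addCol0_card (ν : YoungDiagram) (k : ℕ) : (addCol0 ν k).card = ν.card + k := by
  have hdisj : Disjoint ν.cells ((Finset.Ico (ν.colLen 0) (ν.colLen 0 + k)) ×ˢ ({0} : Finset ℕ)) := by
    rw [Finset.disjoint_left]
    rintro ⟨i, j⟩ hm hm'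
    simp only [Finset.mem_product, Finset.mem_Ico, Finset.mem_singleton] at hm'
    have hm2 : (i, 0) ∈ ν := by
      have := (YoungDiagram.mem_cells (i, j)).mp hm
      rwa [hm'.2] at this
    have : i < ν.colLen 0 := YoungDiagram.mem_iff_lt_colLen.mp hm2
    omega
  have hcells : (addCol0 ν k).cells
      = ν.cells ∪ (Finset.Ico (ν.colLen 0) (ν.colLen 0 + k)) ×ˢ ({0} : Finset ℕ) := by
    ext ⟨i, j⟩
    simp only [addCol0, Finset.mem_union, Finset.mem_product, Finset.mem_range,
      Finset.mem_singleton, Finset.mem_Ico]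
    constructor
    · rintro (h | ⟨h1, h2⟩)
      · exact Or.inl h
      · rcases Nat.lt_or_ge i (ν.colLen 0) with h' | h'
        · subst h2
          exact Or.inl ((YoungDiagram.mem_cells (i, 0)).mpr (YoungDiagram.mem_iff_lt_colLen.mpr h'))
        · exact Or.inr ⟨⟨h', h1⟩, h2⟩
    · rintro (h | ⟨⟨_, h1⟩, h2⟩)
      · exact Or.inl h
      · exact Or.inr ⟨h1, h2⟩
  have : (addCol0 ν k).card = ν.cells.card
      + ((Finset.Ico (ν.colLen 0) (ν.colLen 0 + k)) ×ˢ ({0} : Finset ℕ)).card := by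
    rw [YoungDiagram.card, hcells, Finset.card_union_of_disjoint hdisj]
  simpa using this

lemma vstrip_addCol0 (ν : YoungDiagram) (k : ℕ) : VStrip ν (addCol0 ν k) := by
  refine ⟨le_addCol0 ν k, fun i j1 j2 h1 h1' h2 h2' => ?_⟩
  have e1 : j1 = 0 := by
    rcases mem_addCol0.mp h1 with h | h
    · exact absurd h h1'
    · exact h.2
  have e2 : j2 = 0 := by
    rcases mem_addCol0.mp h2 with h | h
    · exact absurd h h2'
    · exact h.2
  rw [e1, e2]

/-- Let `λ, μ ⊢ m` and `n₀, n ∈ N(m)` with `n₀ < n`.  If `λ` and `μ` are `n₀`-similar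
(`V^{n₀}(λ,μ) ≠ ∅`), then they are also `n`-similar. -/
theorem n_similar_mono (m n₀ n : ℕ) (l μ : YoungDiagram)
    (hl : l.card = m) (hμ : μ.card = m)
    (h₀ : m ≤ n₀ ∧ n₀ % 2 = m % 2) (h : m ≤ n ∧ n % 2 = m % 2) (hlt : n₀ < n)
    (hsim : ∃ ν : YoungDiagram, VReach l ν ∧ VReach μ ν ∧ ν.card = n₀) :
    ∃ ν : YoungDiagram, VReach l ν ∧ VReach μ ν ∧ ν.card = n := by
  obtain ⟨ν, hlν, hμν, hcard⟩ := hsim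
  refine ⟨addCol0 ν (n - n₀), ?_, ?_, ?_⟩
  · exact VReach.step hlν (vstrip_addCol0 ν _) (by
      rw [addCol0_card, hcard]
      simp only [Nat.even_iff]; omega)
  · exact VReach.step hμν (vstrip_addCol0 ν _) (by
      rw [addCol0_card, hcard]
      simp only [Nat.even_iff]; omega)
  · rw [addCol0_card, hcard]; omega
end

section
/- Linear independence: for every m ≥ 0 and every n ∈ N(m), the family of homogeneous SSOT functions (ss_{λ,n} : λ a partition of m) is linearly independent over ℂ in the space of homogeneous symmetric functions of degree n. -/
open scoped BigOperators Classical

section Helpers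

namespace LIhelp

open YoungDiagram Finset


open YoungDiagram Finset

/-- cells determine the diagram -/
theorem yd_ext {μ ν : YoungDiagram} (h : μ.cells = ν.cells) : μ = ν := by
  cases μ; cases ν; simpa using h

theorem yd_ext_mem {μ ν : YoungDiagram} (h : ∀ c : ℕ × ℕ, c ∈ μ ↔ c ∈ ν) : μ = ν := by
  apply yd_ext; ext c; simpa [YoungDiagram.mem_cells] using h c

theorem rowLen_le_of_le {μ ν : YoungDiagram} (h : μ ≤ ν) (i : ℕ) :
    μ.rowLen i ≤ ν.rowLen i := by
  by_contra hc
  push_neg at hc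
  have h1 : (i, ν.rowLen i) ∈ μ := YoungDiagram.mem_iff_lt_rowLen.2 hc
  have h2 : (i, ν.rowLen i) ∈ ν := YoungDiagram.cells_subset_iff.2 h h1
  exact absurd (YoungDiagram.mem_iff_lt_rowLen.1 h2) (lt_irrefl _)

theorem colLen_le_of_le {μ ν : YoungDiagram} (h : μ ≤ ν) (j : ℕ) :
    μ.colLen j ≤ ν.colLen j := by
  by_contra hc
  push_neg at hc
  have h1 : (ν.colLen j, j) ∈ μ := YoungDiagram.mem_iff_lt_colLen.2 hc
  have h2 : (ν.colLen j, j) ∈ ν := YoungDiagram.cells_subset_iff.2 h h1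
  exact absurd (YoungDiagram.mem_iff_lt_colLen.1 h2) (lt_irrefl _)

theorem eq_of_rowLen_eq {μ ν : YoungDiagram} (h : ∀ i, μ.rowLen i = ν.rowLen i) : μ = ν := by
  apply yd_ext_mem
  rintro ⟨i, j⟩
  rw [YoungDiagram.mem_iff_lt_rowLen, YoungDiagram.mem_iff_lt_rowLen, h i]

theorem yd_card_le_of_le {μ ν : YoungDiagram} (h : μ ≤ ν) : μ.card ≤ ν.card :=
  Finset.card_le_card (YoungDiagram.cells_subset_iff.2 h)

theorem yd_eq_of_le_of_card_le {μ ν : YoungDiagram} (h : μ ≤ ν) (hc : ν.card ≤ μ.card) :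
    μ = ν :=
  yd_ext (Finset.eq_of_subset_of_card_le (YoungDiagram.cells_subset_iff.2 h) hc)

theorem yd_card_eq_zero {ν : YoungDiagram} (h : ν.card = 0) : ν = ⊥ := by
  apply yd_ext
  rw [Finset.card_eq_zero.1 h, YoungDiagram.cells_bot]

/-- a helper to compute rowLen -/
theorem rowLen_eq_of {ν : YoungDiagram} {i v : ℕ} (h : ∀ c, (i, c) ∈ ν ↔ c < v) :
    ν.rowLen i = v := by
  rcases le_or_gt (ν.rowLen i) v with h1 | h1
  · rcases lt_or_eq_of_le h1 with h2 | h2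
    · exact absurd (YoungDiagram.mem_iff_lt_rowLen.1 ((h _).2 h2)) (lt_irrefl _)
    · exact h2
  · exact absurd ((h _).1 (YoungDiagram.mem_iff_lt_rowLen.2 h1)) (lt_irrefl _)

theorem rowLen_pos_iff {ν : YoungDiagram} {i : ℕ} : 0 < ν.rowLen i ↔ (i, 0) ∈ ν := by
  rw [YoungDiagram.mem_iff_lt_rowLen]

theorem row_lt_colLen {ν : YoungDiagram} {i : ℕ} (h : ν.rowLen i ≠ 0) : i < ν.colLen 0 := by
  rw [← YoungDiagram.mem_iff_lt_colLen]
  exact rowLen_pos_iff.1 (Nat.pos_of_ne_zero h)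

theorem colLen_le_card (ν : YoungDiagram) : ν.colLen 0 ≤ ν.card := by
  rw [YoungDiagram.colLen_eq_card]
  exact Finset.card_le_card (fun c hc => (YoungDiagram.mem_col_iff.1 hc).1)

theorem rowLen_le_card (ν : YoungDiagram) : ν.rowLen 0 ≤ ν.card := by
  rw [YoungDiagram.rowLen_eq_card]
  exact Finset.card_le_card (fun c hc => (YoungDiagram.mem_row_iff.1 hc).1)

theorem card_eq_sum_rowLen (ν : YoungDiagram) (N : ℕ) (hN : ν.colLen 0 ≤ N) :
    ν.card = ∑ i ∈ Finset.range N, ν.rowLen i := by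
  have hcells : ν.cells = (Finset.range N).biUnion (fun i => ν.row i) := by
    ext c
    simp only [Finset.mem_biUnion, Finset.mem_range, YoungDiagram.mem_row_iff]
    constructor
    · intro hc
      refine ⟨c.1, ?_, ?_, rfl⟩
      · have : c.1 < ν.colLen 0 := by
          have := YoungDiagram.mem_iff_lt_colLen.1 (show (c.1, c.2) ∈ ν from hc)
          exact lt_of_lt_of_le this (ν.colLen_anti 0 c.2 (Nat.zero_le _))
        omega
      · exact hc
    · rintro ⟨i, _, hc, rfl⟩
      exact hc
  rw [YoungDiagram.card, hcells, Finset.card_biUnion]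
  · exact Finset.sum_congr rfl (fun i _ => (ν.rowLen_eq_card).symm)
  · intro x _ y _ hxy
    simp only [Finset.disjoint_left, YoungDiagram.mem_row_iff]
    rintro c ⟨_, rfl⟩ ⟨_, h⟩
    exact hxy (h ▸ rfl)


/-! ### single-row diagrams and truncations -/

/-- The single-row Young diagram with `c` cells. -/
def rowYD (c : ℕ) : YoungDiagram where
  cells := ({0} : Finset ℕ) ×ˢ Finset.range c
  isLowerSet := by
    rintro ⟨a1, a2⟩ ⟨b1, b2⟩ ⟨h1, h2⟩ ha
    simp only [Finset.coe_product, Set.mem_prod, Finset.mem_coe, Finset.mem_singleton,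
      Finset.mem_range] at ha ⊢
    omega

theorem mem_rowYD {c : ℕ} {x : ℕ × ℕ} : x ∈ rowYD c ↔ x.1 = 0 ∧ x.2 < c := by
  cases x
  rw [← YoungDiagram.mem_cells]
  simp only [rowYD, YoungDiagram.mem_mk, Finset.mem_product, Finset.mem_singleton,
    Finset.mem_range]
  all_goals omega

theorem rowLen_rowYD (c i : ℕ) : (rowYD c).rowLen i = if i = 0 then c else 0 := by
  split_ifs with h
  · subst h
    exact rowLen_eq_of (fun j => by simp [mem_rowYD])
  · exact rowLen_eq_of (fun j => by simp [mem_rowYD, h])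

theorem card_rowYD (c : ℕ) : (rowYD c).card = c := by
  simp [YoungDiagram.card, rowYD]

/-- truncation of a diagram to its first `s` rows. -/
def trunc (l : YoungDiagram) (s : ℕ) : YoungDiagram where
  cells := l.cells.filter (fun c => c.1 < s)
  isLowerSet := by
    rintro ⟨a1, a2⟩ ⟨b1, b2⟩ ⟨h1, h2⟩ ha
    simp only [Finset.coe_filter, Set.mem_setOf_eq, Finset.mem_coe] at ha ⊢
    exact ⟨l.isLowerSet (b := (b1, b2)) ⟨h1, h2⟩ ha.1, lt_of_le_of_lt h1 ha.2⟩

theorem mem_trunc {l : YoungDiagram} {s : ℕ} {x : ℕ × ℕ} :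
    x ∈ trunc l s ↔ x ∈ l ∧ x.1 < s := by
  cases x
  rw [← YoungDiagram.mem_cells]
  simp [trunc, YoungDiagram.mem_mk, YoungDiagram.mem_cells]

theorem rowLen_trunc (l : YoungDiagram) (s i : ℕ) :
    (trunc l s).rowLen i = if i < s then l.rowLen i else 0 := by
  split_ifs with h
  · exact rowLen_eq_of (fun j => by
      rw [mem_trunc]
      simp only [YoungDiagram.mem_iff_lt_rowLen]
      exact ⟨fun hh => hh.1, fun hh => ⟨hh, h⟩⟩)
  · exact rowLen_eq_of (fun j => by simp [mem_trunc]; omega)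

theorem trunc_le (l : YoungDiagram) (s : ℕ) : trunc l s ≤ l := by
  intro x hx
  exact (mem_trunc.1 hx).1

theorem trunc_le_trunc (l : YoungDiagram) {s s' : ℕ} (h : s ≤ s') : trunc l s ≤ trunc l s' := by
  intro x hx
  rw [mem_trunc] at hx ⊢
  exact ⟨hx.1, lt_of_lt_of_le hx.2 h⟩

theorem trunc_eq_self {l : YoungDiagram} {s : ℕ} (h : l.colLen 0 ≤ s) : trunc l s = l := by
  apply yd_ext_mem
  intro c
  rw [mem_trunc]
  refine ⟨fun hh => hh.1, fun hh => ⟨hh, ?_⟩⟩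
  have : c.1 < l.colLen 0 :=
    lt_of_lt_of_le (YoungDiagram.mem_iff_lt_colLen.1 (show (c.1, c.2) ∈ l from hh))
      (l.colLen_anti 0 c.2 (Nat.zero_le _))
  omega

theorem card_trunc (l : YoungDiagram) (s : ℕ) :
    (trunc l s).card = ∑ j ∈ Finset.range s, l.rowLen j := by
  have hN : (trunc l s).colLen 0 ≤ max s (l.colLen 0) :=
    le_trans (colLen_le_of_le (trunc_le l s) 0) (le_max_right _ _)
  rw [card_eq_sum_rowLen _ (max s (l.colLen 0)) hN]
  rw [← Finset.sum_range_add_sum_Ico _ (le_max_left s (l.colLen 0))]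
  have h1 : ∀ j ∈ Finset.range s, (trunc l s).rowLen j = l.rowLen j := by
    intro j hj
    rw [rowLen_trunc, if_pos (Finset.mem_range.1 hj)]
  have h2 : ∀ j ∈ Finset.Ico s (max s (l.colLen 0)), (trunc l s).rowLen j = 0 := by
    intro j hj
    rw [rowLen_trunc, if_neg (by exact Nat.not_lt.2 (Finset.mem_Ico.1 hj).1)]
  rw [Finset.sum_congr rfl h1, Finset.sum_congr rfl h2]
  simp

/-! ### horizontal strip lemmas -/

theorem hstrip_refl (ν : YoungDiagram) : HStrip ν ν :=
  ⟨le_refl _, fun i₁ i₂ j h1 h2 => absurd h1 (by simpa using h2)⟩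

theorem hstrip_bot (ν : YoungDiagram) : HStrip ⊥ ν ∨ True := Or.inr trivial

/-- if all cells of the difference lie in a single row, we get a horizontal strip -/
theorem hstrip_of_single_row {μ ν : YoungDiagram} (hle : μ ≤ ν) (r : ℕ)
    (h : ∀ x : ℕ × ℕ, x ∈ ν → x ∉ μ → x.1 = r) : HStrip μ ν := by
  refine ⟨hle, fun i₁ i₂ j h1 h2 h3 h4 => ?_⟩
  have e1 := h (i₁, j) h1 h2
  have e2 := h (i₂, j) h3 h4
  simp only at e1 e2
  omega

theorem hstrip_interlace {μ ν : YoungDiagram} (h : HStrip μ ν) (i : ℕ) :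
    ν.rowLen (i + 1) ≤ μ.rowLen i := by
  by_contra hc
  push_neg at hc
  set c := μ.rowLen i with hc'
  have h1 : (i, c) ∈ ν := by
    rw [YoungDiagram.mem_iff_lt_rowLen]
    exact lt_of_lt_of_le hc (ν.rowLen_anti i (i + 1) (Nat.le_succ _))
  have h2 : (i, c) ∉ μ := by
    rw [YoungDiagram.mem_iff_lt_rowLen]; omega
  have h3 : (i + 1, c) ∈ ν := by
    rw [YoungDiagram.mem_iff_lt_rowLen]; exact hc
  have h4 : (i + 1, c) ∉ μ := by
    rw [YoungDiagram.mem_iff_lt_rowLen]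
    have := μ.rowLen_anti i (i + 1) (Nat.le_succ _)
    omega
  exact absurd (h.2 i (i + 1) c h1 h2 h3 h4) (by omega)

end LIhelp

end Helpers


section SSOTLemmas

namespace LIhelp

open YoungDiagram Finset

theorem yd_card_bot : (⊥ : YoungDiagram).card = 0 := by
  simp [YoungDiagram.card]

theorem rowLen_bot (j : ℕ) : (⊥ : YoungDiagram).rowLen j = 0 :=
  rowLen_eq_of (fun c => by simp)

variable (S : SSOT)

theorem D_le_A : ∀ i, S.D i ≤ S.A i
  | 0 => by rw [S.hD0]; exact bot_le
  | 1 => by rw [S.hD1]; exact bot_le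
  | (i + 2) => (S.strip_add (i + 2) (by omega)).1

theorem D_le_A' : ∀ i, 1 ≤ i → S.D i ≤ S.A (i - 1)
  | 0, h => by omega
  | 1, _ => by rw [S.hD1]; exact bot_le
  | (i + 2), _ => by
      have := (S.strip_del (i + 1) (by omega)).1
      simpa using this

/-- the number of boxes added in step `i`. -/
def addc (i : ℕ) : ℕ := (S.A i).card - (S.D i).card

theorem cardD_add_addc (i : ℕ) : (S.D i).card + addc S i = (S.A i).card := by
  have := yd_card_le_of_le (D_le_A S i)
  unfold addc; omega

theorem cardD_add_delc (i : ℕ) (hi : 1 ≤ i) :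
    (S.D i).card + S.delc i = (S.A (i - 1)).card := by
  have := yd_card_le_of_le (D_le_A' S i hi)
  unfold SSOT.delc; omega

theorem mult_eq (i : ℕ) (hi : 1 ≤ i) : S.mult i = S.delc i + addc S i := by
  unfold SSOT.mult SSOT.delc addc
  rw [if_neg (by omega)]

theorem mult_of_steps_lt (i : ℕ) (hi : S.steps < i) : S.mult i = 0 := by
  have h1 : S.A i = S.A S.steps := S.stableA i (by omega)
  have h2 : S.A (i - 1) = S.A S.steps := S.stableA (i - 1) (by omega)
  have h3 : S.D i = S.A S.steps := S.stableD i hi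
  unfold SSOT.mult
  rw [if_neg (by omega), h1, h2, h3]
  omega

theorem wt_apply (j : ℕ) : S.wt j = S.mult (j + 1) := by
  unfold SSOT.wt
  rw [Finsupp.finset_sum_apply]
  have : ∀ i ∈ Finset.range S.steps,
      (Finsupp.single i (S.mult (i + 1))) j = if i = j then S.mult (i + 1) else 0 := by
    intro i _
    rw [Finsupp.single_apply]
  rw [Finset.sum_congr rfl this, Finset.sum_ite_eq' (Finset.range S.steps) j
    (fun i => S.mult (i + 1))]
  split_ifs with h
  · rfl
  · rw [mult_of_steps_lt S (j + 1) (by simp at h; omega)]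

theorem steps_mult_ne (h : S.steps ≠ 0) : S.mult S.steps ≠ 0 := by
  intro h0
  rw [mult_eq S S.steps (by omega)] at h0
  have hd : S.delc S.steps = 0 := by omega
  have ha : addc S S.steps = 0 := by omega
  have e1 := cardD_add_delc S S.steps (by omega)
  have e2 := cardD_add_addc S S.steps
  have hDA' : S.D S.steps = S.A (S.steps - 1) :=
    yd_eq_of_le_of_card_le (D_le_A' S S.steps (by omega)) (by omega)
  have hDA : S.D S.steps = S.A S.steps :=
    yd_eq_of_le_of_card_le (D_le_A S S.steps) (by omega)
  exact S.minimal h ⟨hDA, hDA.symm.trans hDA'⟩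

theorem length_eq_sum (Q : ℕ) (hQ : S.steps ≤ Q) :
    S.length = ∑ j ∈ Finset.range Q, S.mult (j + 1) := by
  unfold SSOT.length
  rw [Finset.sum_range_succ']
  have h0 : S.mult 0 = 0 := by unfold SSOT.mult; rw [if_pos rfl]
  rw [h0, add_zero]
  rw [← Finset.sum_range_add_sum_Ico (fun j => S.mult (j + 1)) hQ]
  have : ∀ j ∈ Finset.Ico S.steps Q, S.mult (j + 1) = 0 := by
    intro j hj
    exact mult_of_steps_lt S (j + 1) (by have := (Finset.mem_Ico.1 hj).1; omega)
  rw [Finset.sum_congr rfl this]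
  simp

theorem telescope : ∀ Q : ℕ,
    (S.A Q).card + ∑ j ∈ Finset.range Q, S.delc (j + 1) =
      ∑ j ∈ Finset.range Q, addc S (j + 1)
  | 0 => by simp [S.hA0, yd_card_bot]
  | (q + 1) => by
      rw [Finset.sum_range_succ, Finset.sum_range_succ]
      have ih := telescope q
      have h1 := cardD_add_addc S (q + 1)
      have h2 := cardD_add_delc S (q + 1) (by omega)
      simp only [Nat.add_sub_cancel] at h2
      omega

/-! ### top-p row sums -/

/-- sum of the lengths of the first `p` rows. -/
def tp (p : ℕ) (ν : YoungDiagram) : ℕ := ∑ j ∈ Finset.range p, ν.rowLen j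

theorem tp_le_card (p : ℕ) (ν : YoungDiagram) : tp p ν ≤ ν.card := by
  rw [card_eq_sum_rowLen ν (max p (ν.colLen 0)) (le_max_right _ _)]
  exact Finset.sum_le_sum_of_subset
    (Finset.range_subset_range.2 (le_max_left _ _))

theorem tp_mono {μ ν : YoungDiagram} (h : μ ≤ ν) (p : ℕ) : tp p μ ≤ tp p ν :=
  Finset.sum_le_sum (fun j _ => rowLen_le_of_le h j)

/-- number of boxes outside the first `p` rows. -/
def bp (p : ℕ) (ν : YoungDiagram) : ℕ := ν.card - tp p ν

theorem tp_add_bp (p : ℕ) (ν : YoungDiagram) : tp p ν + bp p ν = ν.card := by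
  have := tp_le_card p ν
  unfold bp; omega

theorem bp_eq_sum (p N : ℕ) (ν : YoungDiagram) (hN : ν.colLen 0 ≤ N) (hp : p ≤ N) :
    bp p ν = ∑ j ∈ Finset.Ico p N, ν.rowLen j := by
  have h1 := card_eq_sum_rowLen ν N hN
  rw [← Finset.sum_range_add_sum_Ico _ hp] at h1
  have := tp_add_bp p ν
  unfold tp at this
  omega

theorem bp_mono {μ ν : YoungDiagram} (h : μ ≤ ν) (p : ℕ) : bp p μ ≤ bp p ν := by
  set N := max p (max (μ.colLen 0) (ν.colLen 0)) with hN
  rw [bp_eq_sum p N μ (by omega) (by omega), bp_eq_sum p N ν (by omega) (by omega)]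
  exact Finset.sum_le_sum (fun j _ => rowLen_le_of_le h j)

theorem cardA1 (h1 : S.mult 1 = 0) : (S.A 1).card = 0 := by
  unfold SSOT.mult at h1
  rw [if_neg (by omega), S.hA0, S.hD1, yd_card_bot] at h1
  omega

theorem A_rows (h1 : S.mult 1 = 0) : ∀ i j, i ≤ j + 1 → (S.A i).rowLen j = 0 := by
  intro i
  induction i with
  | zero => intro j _; rw [S.hA0, rowLen_bot]
  | succ q ih =>
      intro j hj
      match q, hj with
      | 0, _ =>
          rw [yd_card_eq_zero (cardA1 S h1), rowLen_bot]
      | (q' + 1), hj =>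
          show (S.A (q' + 2)).rowLen j = 0
          have hj' : 1 ≤ j := by omega
          obtain ⟨j', rfl⟩ : ∃ j', j = j' + 1 := ⟨j - 1, by omega⟩
          have e1 : (S.A (q' + 2)).rowLen (j' + 1) ≤ (S.D (q' + 2)).rowLen j' :=
            hstrip_interlace (S.strip_add (q' + 2) (by omega)) j'
          have e2 : (S.D (q' + 2)).rowLen j' ≤ (S.A (q' + 1)).rowLen j' := by
            have := rowLen_le_of_le (D_le_A' S (q' + 2) (by omega)) j'
            simpa using this
          have e3 : (S.A (q' + 1)).rowLen j' = 0 := ih j' (by omega)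
          omega

theorem bp_A_le (h1 : S.mult 1 = 0) (p : ℕ) :
    ∀ i, bp p (S.A i) ≤ ∑ j ∈ Finset.Ico (p + 1) i, addc S (j + 1) := by
  intro i
  induction i with
  | zero => rw [S.hA0]; unfold bp; rw [yd_card_bot]; simp
  | succ q ih =>
      by_cases hq : q + 1 ≤ p + 1
      · have hz : bp p (S.A (q + 1)) = 0 := by
          rw [bp_eq_sum p (max p ((S.A (q + 1)).colLen 0)) _ (le_max_right _ _)
            (le_max_left _ _)]
          apply Finset.sum_eq_zero
          intro j hj
          have hjp : p ≤ j := (Finset.mem_Ico.1 hj).1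
          exact A_rows S h1 (q + 1) j (by omega)
        rw [hz]; exact Nat.zero_le _
      · push_neg at hq
        have hle : p + 1 ≤ q := by omega
        have hDa : bp p (S.D (q + 1)) ≤ bp p (S.A q) := by
          have := bp_mono (D_le_A' S (q + 1) (by omega)) p
          simpa using this
        have e1 := tp_add_bp p (S.A (q + 1))
        have e2 := tp_add_bp p (S.D (q + 1))
        have e3 := cardD_add_addc S (q + 1)
        have e4 := tp_mono (D_le_A S (q + 1)) p
        rw [Finset.sum_Ico_succ_top (by omega : p + 1 ≤ q)]
        omega

/-! ### the distinguished weight vector -/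

/-- The weight vector `(0, λ₁+T, λ₂+T, λ₃, λ₄, …)` : letter 1 is unused. -/
noncomputable def dvec (l : YoungDiagram) (T : ℕ) : ℕ →₀ ℕ :=
  Finsupp.single 1 (l.rowLen 0 + T) + Finsupp.single 2 (l.rowLen 1 + T) +
    ∑ j ∈ Finset.range l.card, Finsupp.single (j + 3) (l.rowLen (j + 2))

theorem dvec_apply (l : YoungDiagram) (T q : ℕ) :
    dvec l T q = if q = 0 then 0 else l.rowLen (q - 1) + (if q ≤ 2 then T else 0) := by
  unfold dvec
  rw [Finsupp.add_apply, Finsupp.add_apply, Finsupp.finset_sum_apply]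
  rw [Finsupp.single_apply, Finsupp.single_apply]
  have hs : ∀ j ∈ Finset.range l.card,
      (Finsupp.single (j + 3) (l.rowLen (j + 2))) q
        = if j + 3 = q then l.rowLen (j + 2) else 0 := fun j _ => Finsupp.single_apply
  rw [Finset.sum_congr rfl hs]
  rcases Nat.lt_or_ge q 3 with h3 | h3
  · have hz : ∀ j ∈ Finset.range l.card,
        (if j + 3 = q then l.rowLen (j + 2) else 0) = 0 := fun j _ => if_neg (by omega)
    rw [Finset.sum_congr rfl hz, Finset.sum_const_zero]
    interval_cases q
    · simp
    · simp
    · simp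
  · obtain ⟨q', rfl⟩ : ∃ q', q = q' + 3 := ⟨q - 3, by omega⟩
    rw [if_neg (by omega : (1 : ℕ) ≠ q' + 3), if_neg (by omega : (2 : ℕ) ≠ q' + 3),
      if_neg (by omega : ¬(q' + 3 = 0)), if_neg (by omega : ¬(q' + 3 ≤ 2))]
    have hj : ∀ j ∈ Finset.range l.card,
        (if j + 3 = q' + 3 then l.rowLen (j + 2) else 0)
          = if j = q' then l.rowLen (j + 2) else 0 := by
      intro j _
      congr 1
      simp only [eq_iff_iff]
      omega
    rw [Finset.sum_congr rfl hj, Finset.sum_ite_eq' (Finset.range l.card) q'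
      (fun j => l.rowLen (j + 2))]
    have hq2 : q' + 3 - 1 = q' + 2 := by omega
    rw [hq2]
    split_ifs with hmem
    · omega
    · simp only [Finset.mem_range, not_lt] at hmem
      have : l.rowLen (q' + 2) = 0 := by
        by_contra hr
        have := lt_of_lt_of_le (row_lt_colLen hr) (colLen_le_card l)
        omega
      omega

theorem dvec_sum (l : YoungDiagram) (T Q : ℕ) (h2 : 2 ≤ Q) :
    ∑ j ∈ Finset.range (Q + 1), dvec l T j = tp Q l + 2 * T := by
  rw [Finset.sum_range_succ']
  have hz : dvec l T 0 = 0 := by rw [dvec_apply]; simp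
  rw [hz, add_zero]
  have hv : ∀ j ∈ Finset.range Q, dvec l T (j + 1)
      = l.rowLen j + (if j + 1 ≤ 2 then T else 0) := by
    intro j _
    rw [dvec_apply, if_neg (by omega)]
    simp
  rw [Finset.sum_congr rfl hv, Finset.sum_add_distrib]
  unfold tp
  congr 1
  rw [← Finset.sum_range_add_sum_Ico _ h2]
  have hI : ∀ j ∈ Finset.Ico 2 Q, (if j + 1 ≤ 2 then T else 0) = 0 := by
    intro j hj
    rw [if_neg (by have := (Finset.mem_Ico.1 hj).1; omega)]
  rw [Finset.sum_congr rfl hI]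
  simp [Finset.sum_range_succ]
  omega

/-! ### the dominance lemma -/

theorem dom_of_ssot (l : YoungDiagram) (T : ℕ) (S : SSOT)
    (hwt : S.wt = dvec l T) (hcard : S.shape.card = l.card) (p : ℕ) :
    tp p l ≤ tp p S.shape := by
  rcases Nat.eq_zero_or_pos p with rfl | hp
  · unfold tp; simp
  have hm : ∀ j, S.mult (j + 1) = dvec l T j := by
    intro j; rw [← wt_apply, hwt]
  have h1 : S.mult 1 = 0 := by rw [hm 0, dvec_apply]; simp
  set m := l.card with hmdef
  set K := S.steps with hK
  set Q := p + K + m + 3 with hQ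
  -- telescoping and total sums
  have htel := telescope S Q
  have hAQ : S.A Q = S.shape := S.stableA Q (by omega)
  have hcardAQ : (S.A Q).card = m := by rw [hAQ, hcard]
  have hmsum : ∑ j ∈ Finset.range Q, S.mult (j + 1)
      = ∑ j ∈ Finset.range Q, (S.delc (j + 1) + addc S (j + 1)) :=
    Finset.sum_congr rfl (fun j _ => mult_eq S (j + 1) (by omega))
  rw [Finset.sum_add_distrib] at hmsum
  set Dl := ∑ j ∈ Finset.range Q, S.delc (j + 1) with hDl
  set Ad := ∑ j ∈ Finset.range Q, addc S (j + 1) with hAd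
  -- total multiplicity
  have hQ1 : Q = (Q - 1) + 1 := by omega
  have hdsum : ∑ j ∈ Finset.range Q, S.mult (j + 1) = tp (Q - 1) l + 2 * T := by
    rw [Finset.sum_congr rfl (fun j _ => hm j), hQ1]
    exact dvec_sum l T (Q - 1) (by omega)
  have htpQ : tp (Q - 1) l = m := by
    unfold tp
    rw [hmdef, card_eq_sum_rowLen l (Q - 1) (by have := colLen_le_card l; omega)]
  -- conclude Dl = T
  have hDlT : Dl = T := by omega
  -- the bp bound
  have hbp := bp_A_le S h1 p Q
  have hsplit : ∑ j ∈ Finset.range (p + 1), addc S (j + 1)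
      + ∑ j ∈ Finset.Ico (p + 1) Q, addc S (j + 1) = Ad := by
    rw [hAd]; exact Finset.sum_range_add_sum_Ico _ (by omega)
  set Sp := ∑ j ∈ Finset.range (p + 1), addc S (j + 1) with hSp
  set Sd := ∑ j ∈ Finset.range (p + 1), S.delc (j + 1) with hSd
  have hSm : ∑ j ∈ Finset.range (p + 1), S.mult (j + 1) = Sp + Sd := by
    rw [Finset.sum_congr rfl (fun j (_ : j ∈ Finset.range (p + 1)) =>
      mult_eq S (j + 1) (by omega)), Finset.sum_add_distrib]
    omega
  have hSdDl : Sd ≤ Dl := by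
    rw [hSd, hDl]
    exact Finset.sum_le_sum_of_subset (Finset.range_subset_range.2 (by omega))
  have hshape : tp p S.shape + bp p S.shape = m := by
    rw [tp_add_bp, hcard]
  rw [hAQ] at hbp hcardAQ htel
  -- two cases : p = 1 and p ≥ 2
  rcases Nat.lt_or_ge p 2 with hp2 | hp2
  · -- p = 1
    have hpe : p = 1 := by omega
    subst hpe
    have hSm1 : ∑ j ∈ Finset.range (1 + 1), S.mult (j + 1) = tp 1 l + T := by
      rw [Finset.sum_range_succ, Finset.sum_range_succ, Finset.sum_range_zero,
        hm 0, hm 1, dvec_apply, dvec_apply]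
      unfold tp
      simp [Finset.sum_range_succ]
    have hSd1 : Sd = 0 := by
      rw [hSd, Finset.sum_range_succ, Finset.sum_range_succ, Finset.sum_range_zero]
      norm_num
      have hd1 : S.delc 1 = 0 := by
        unfold SSOT.delc
        rw [show (1 : ℕ) - 1 = 0 from rfl, S.hA0, yd_card_bot]
        omega
      have hd2 : S.delc 2 = 0 := by
        unfold SSOT.delc
        simp only [show (2 : ℕ) - 1 = 1 from rfl]
        have := cardA1 S h1
        omega
      omega
    omega
  · -- p ≥ 2
    have hSm2 : ∑ j ∈ Finset.range (p + 1), S.mult (j + 1) = tp p l + 2 * T := by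
      rw [Finset.sum_congr rfl (fun j (_ : j ∈ Finset.range (p + 1)) => hm j)]
      exact dvec_sum l T p hp2
    omega

end LIhelp

end SSOTLemmas


section Canonical

namespace LIhelp

open YoungDiagram Finset

theorem colLen0_pos {l : YoungDiagram} (h : l.card ≠ 0) : 0 < l.colLen 0 := by
  obtain ⟨c, hc⟩ := Finset.card_pos.1 (Nat.pos_of_ne_zero h)
  have : (0, 0) ∈ l := l.up_left_mem (Nat.zero_le _) (Nat.zero_le _) (by
    rw [YoungDiagram.mem_cells] at hc
    exact (show (c.1, c.2) ∈ l from hc))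
  exact YoungDiagram.mem_iff_lt_colLen.1 this

theorem rowYD_zero : rowYD 0 = ⊥ := by
  apply yd_ext_mem
  intro c
  simp [mem_rowYD]

theorem rowYD_eq_self {l : YoungDiagram} (h : l.colLen 0 ≤ 1) : rowYD (l.rowLen 0) = l := by
  apply yd_ext_mem
  intro c
  rw [mem_rowYD]
  constructor
  · rintro ⟨h1, h2⟩
    rw [show c = (c.1, c.2) from rfl, h1]
    exact YoungDiagram.mem_iff_lt_rowLen.2 h2
  · intro hc
    have h1 : c.1 = 0 := by
      have := YoungDiagram.mem_iff_lt_colLen.1 (show (c.1, c.2) ∈ l from hc)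
      have := l.colLen_anti 0 c.2 (Nat.zero_le _)
      omega
    refine ⟨h1, ?_⟩
    have := YoungDiagram.mem_iff_lt_rowLen.1 (show (c.1, c.2) ∈ l from hc)
    rw [h1] at this
    exact this

theorem trunc_zero (l : YoungDiagram) : trunc l 0 = ⊥ := by
  apply yd_ext_mem
  intro c
  simp [mem_trunc]

theorem trunc_pred_ne {l : YoungDiagram} (hr : 1 ≤ l.colLen 0) :
    trunc l (l.colLen 0 - 1) ≠ l := by
  intro he
  have h1 : (trunc l (l.colLen 0 - 1)).rowLen (l.colLen 0 - 1) = 0 := by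
    rw [rowLen_trunc, if_neg (lt_irrefl _)]
  have h2 : 0 < l.rowLen (l.colLen 0 - 1) :=
    rowLen_pos_iff.2 (YoungDiagram.mem_iff_lt_colLen.2 (by omega))
  rw [he] at h1
  omega

variable (l : YoungDiagram) (T : ℕ)

/-- number of steps of the canonical SSOT. -/
def canonK : ℕ :=
  if l.card = 0 ∧ T = 0 then 0 else (if T = 0 then l.colLen 0 + 1 else max (l.colLen 0) 2 + 1)

/-- shapes of the canonical SSOT. -/
noncomputable def canonA (i : ℕ) : YoungDiagram :=
  if i ≤ 1 then ⊥ else if i = 2 then rowYD (l.rowLen 0 + T) else trunc l (i - 1)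

/-- deletion shapes of the canonical SSOT. -/
noncomputable def canonD (i : ℕ) : YoungDiagram :=
  if i ≤ 2 then ⊥ else trunc l (i - 2)

theorem canonA_ge (i : ℕ) (hi : canonK l T ≤ i) : canonA l T i = l := by
  by_cases h0 : l.card = 0 ∧ T = 0
  · have hl : l = ⊥ := yd_card_eq_zero h0.1
    unfold canonA
    split_ifs with hc1 hc2
    · exact hl.symm
    · rw [hl, h0.2]
      have : (⊥ : YoungDiagram).rowLen 0 = 0 := rowLen_bot 0
      rw [this, rowYD_zero]
    · rw [hl]
      exact trunc_eq_self (by rw [show ((⊥ : YoungDiagram).colLen 0) = 0 by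
        have h := colLen_le_card (⊥ : YoungDiagram); rw [yd_card_bot] at h; omega]; omega)
  · have hK : canonK l T = (if T = 0 then l.colLen 0 + 1 else max (l.colLen 0) 2 + 1) :=
      if_neg h0
    have hKr : l.colLen 0 + 1 ≤ canonK l T := by
      rw [hK]; split_ifs with h
      · omega
      · have := le_max_left (l.colLen 0) 2; omega
    have hK2 : 2 ≤ canonK l T := by
      rw [hK]; split_ifs with h
      · have hm : l.card ≠ 0 := fun hc => h0 ⟨hc, h⟩
        have := colLen0_pos hm; omega
      · have := le_max_right (l.colLen 0) 2; omega
    unfold canonA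
    rw [if_neg (by omega)]
    by_cases hi2 : i = 2
    · rw [if_pos hi2]
      have hT0 : T = 0 := by
        by_contra hT
        rw [hK, if_neg hT] at hi
        have := le_max_right (l.colLen 0) 2
        omega
      rw [hT0, add_zero]
      exact rowYD_eq_self (by omega)
    · rw [if_neg hi2]
      exact trunc_eq_self (by omega)

theorem canonD_gt (i : ℕ) (hi : canonK l T < i) : canonD l i = l := by
  by_cases h0 : l.card = 0 ∧ T = 0
  · have hl : l = ⊥ := yd_card_eq_zero h0.1
    unfold canonD
    split_ifs with hc
    · exact hl.symm
    · rw [hl]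
      exact trunc_eq_self (by rw [show ((⊥ : YoungDiagram).colLen 0) = 0 by
        have h := colLen_le_card (⊥ : YoungDiagram); rw [yd_card_bot] at h; omega]; omega)
  · have hK : canonK l T = (if T = 0 then l.colLen 0 + 1 else max (l.colLen 0) 2 + 1) :=
      if_neg h0
    have hKr : l.colLen 0 + 1 ≤ canonK l T := by
      rw [hK]; split_ifs with h
      · omega
      · have := le_max_left (l.colLen 0) 2; omega
    have hK2 : 2 ≤ canonK l T := by
      rw [hK]; split_ifs with h
      · have hm : l.card ≠ 0 := fun hc => h0 ⟨hc, h⟩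
        have := colLen0_pos hm; omega
      · have := le_max_right (l.colLen 0) 2; omega
    unfold canonD
    rw [if_neg (by omega)]
    exact trunc_eq_self (by omega)

/-- The canonical SSOT of shape `l` and weight `dvec l T`. -/
noncomputable def canon : SSOT where
  steps := canonK l T
  A := canonA l T
  D := canonD l
  hA0 := by unfold canonA; rw [if_pos (by omega)]
  hD0 := by unfold canonD; rw [if_pos (by omega)]
  hD1 := by unfold canonD; rw [if_pos (by omega)]
  stableA := fun i hi => by rw [canonA_ge l T i hi, canonA_ge l T _ le_rfl]
  stableD := fun i hi => by rw [canonD_gt l T i hi, canonA_ge l T _ le_rfl]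
  strip_del := by
    intro i hi
    match i, hi with
    | 1, _ =>
        show HStrip (canonD l 2) (canonA l T 1)
        have h1 : canonD l 2 = ⊥ := by unfold canonD; rw [if_pos (by omega)]
        have h2 : canonA l T 1 = ⊥ := by unfold canonA; rw [if_pos (by omega)]
        rw [h1, h2]
        exact hstrip_refl ⊥
    | 2, _ =>
        show HStrip (canonD l 3) (canonA l T 2)
        have h1 : canonD l 3 = trunc l 1 := by unfold canonD; rw [if_neg (by omega)]
        have h2 : canonA l T 2 = rowYD (l.rowLen 0 + T) := by
          unfold canonA; rw [if_neg (by omega), if_pos rfl]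
        rw [h1, h2]
        apply hstrip_of_single_row (r := 0)
        · intro x hx
          rw [mem_trunc] at hx
          rw [mem_rowYD]
          
          have hx1 : x.1 = 0 := by omega
          refine ⟨hx1, ?_⟩
          have := YoungDiagram.mem_iff_lt_rowLen.1 (show (x.1, x.2) ∈ l from hx.1)
          rw [hx1] at this
          omega
        · intro x hx _
          exact (mem_rowYD.1 hx).1
    | (i + 3), _ =>
        show HStrip (canonD l (i + 4)) (canonA l T (i + 3))
        have h1 : canonD l (i + 4) = trunc l (i + 2) := by
          unfold canonD; rw [if_neg (by omega)]; congr 1 <;> omega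
        have h2 : canonA l T (i + 3) = trunc l (i + 2) := by
          unfold canonA; rw [if_neg (by omega), if_neg (by omega)]; congr 1 <;> omega
        rw [h1, h2]
        exact hstrip_refl _
  strip_add := by
    intro i hi
    match i, hi with
    | 2, _ =>
        show HStrip (canonD l 2) (canonA l T 2)
        have h1 : canonD l 2 = ⊥ := by unfold canonD; rw [if_pos (by omega)]
        have h2 : canonA l T 2 = rowYD (l.rowLen 0 + T) := by
          unfold canonA; rw [if_neg (by omega), if_pos rfl]
        rw [h1, h2]
        apply hstrip_of_single_row (r := 0) bot_le
        intro x hx _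
        exact (mem_rowYD.1 hx).1
    | (i + 3), _ =>
        show HStrip (canonD l (i + 3)) (canonA l T (i + 3))
        have h1 : canonD l (i + 3) = trunc l (i + 1) := by
          unfold canonD; rw [if_neg (by omega)]; congr 1 <;> omega
        have h2 : canonA l T (i + 3) = trunc l (i + 2) := by
          unfold canonA; rw [if_neg (by omega), if_neg (by omega)]; congr 1 <;> omega
        rw [h1, h2]
        apply hstrip_of_single_row (trunc_le_trunc l (by omega)) (i + 1)
        intro x hx hnx
        rw [mem_trunc] at hx
        rw [mem_trunc] at hnx
        push_neg at hnx
        have := hnx hx.1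
        omega
  minimal := by
    intro hK0 hcon
    obtain ⟨hDA, hAA⟩ := hcon
    have hAK : canonA l T (canonK l T) = l := canonA_ge l T _ le_rfl
    by_cases h0 : l.card = 0 ∧ T = 0
    · exact hK0 (by unfold canonK; rw [if_pos h0])
    by_cases hcase : T = 0 ∨ 2 ≤ l.colLen 0
    · -- K = colLen + 1 and colLen ≥ 1
      have hr1 : 1 ≤ l.colLen 0 := by
        rcases hcase with hc | hc
        · exact colLen0_pos (fun hm => h0 ⟨hm, hc⟩)
        · omega
      have hKv : canonK l T = l.colLen 0 + 1 := by
        unfold canonK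
        rw [if_neg h0]
        split_ifs with h
        · rfl
        · rcases hcase with hc | hc
          · exact absurd hc h
          · rw [Nat.max_eq_left hc]
      have hDK : canonD l (canonK l T) = trunc l (l.colLen 0 - 1) := by
        unfold canonD
        rw [hKv]
        by_cases hr : l.colLen 0 = 1
        · rw [if_pos (by omega), hr]
          exact (trunc_zero l).symm
        · rw [if_neg (by omega)]
          congr 1
      exact trunc_pred_ne hr1 (by rw [← hDK, hDA, hAK])
    · -- T ≠ 0 and colLen ≤ 1 : compare cards of A 3 and A 2
      push_neg at hcase
      obtain ⟨hT, hr⟩ := hcase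
      have hKv : canonK l T = 3 := by
        unfold canonK
        rw [if_neg h0, if_neg hT, Nat.max_eq_right (by omega : l.colLen 0 ≤ 2)]
      have hA2 : canonA l T (canonK l T - 1) = rowYD (l.rowLen 0 + T) := by
        rw [hKv]
        unfold canonA
        rw [if_neg (by omega), if_pos rfl]
      have hcard : l.card = l.rowLen 0 := by
        rw [card_eq_sum_rowLen l 1 (by omega), Finset.sum_range_one]
      have hle : l = rowYD (l.rowLen 0 + T) := by
        rw [← hA2, ← hAA, hAK]
      have := congrArg YoungDiagram.card hle
      rw [card_rowYD, hcard] at this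
      omega

theorem canon_steps : (canon l T).steps = canonK l T := rfl

theorem canon_mult (j : ℕ) : (canon l T).mult (j + 1) = dvec l T j := by
  unfold SSOT.mult
  rw [if_neg (by omega), dvec_apply]
  show ((canonA l T (j + 1 - 1)).card - (canonD l (j + 1)).card)
    + ((canonA l T (j + 1)).card - (canonD l (j + 1)).card) = _
  match j with
  | 0 =>
      have h1 : canonA l T 0 = ⊥ := by unfold canonA; rw [if_pos (by omega)]
      have h2 : canonA l T 1 = ⊥ := by unfold canonA; rw [if_pos (by omega)]
      have h3 : canonD l 1 = ⊥ := by unfold canonD; rw [if_pos (by omega)]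
      rw [show (0 + 1 - 1 : ℕ) = 0 from rfl, h1, h2, h3, yd_card_bot, if_pos rfl]
  | 1 =>
      have h1 : canonA l T 1 = ⊥ := by unfold canonA; rw [if_pos (by omega)]
      have h2 : canonA l T 2 = rowYD (l.rowLen 0 + T) := by
        unfold canonA; rw [if_neg (by omega), if_pos rfl]
      have h3 : canonD l 2 = ⊥ := by unfold canonD; rw [if_pos (by omega)]
      rw [show (1 + 1 - 1 : ℕ) = 1 from rfl, h1, h2, h3, yd_card_bot, card_rowYD,
        if_neg (by omega), if_pos (by omega)]
      simp
  | 2 =>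
      have h1 : canonA l T 2 = rowYD (l.rowLen 0 + T) := by
        unfold canonA; rw [if_neg (by omega), if_pos rfl]
      have h2 : canonA l T 3 = trunc l 2 := by
        unfold canonA; rw [if_neg (by omega), if_neg (by omega)]
      have h3 : canonD l 3 = trunc l 1 := by unfold canonD; rw [if_neg (by omega)]
      rw [show (2 + 1 - 1 : ℕ) = 2 from rfl, h1, h2, h3, card_rowYD, card_trunc, card_trunc,
        if_neg (by omega), if_pos (by omega)]
      rw [Finset.sum_range_one, Finset.sum_range_succ, Finset.sum_range_one]
      norm_num
      omega
  | (j' + 3) =>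
      have h1 : canonA l T (j' + 3) = trunc l (j' + 2) := by
        unfold canonA; rw [if_neg (by omega), if_neg (by omega)]; congr 1 <;> omega
      have h2 : canonA l T (j' + 4) = trunc l (j' + 3) := by
        unfold canonA; rw [if_neg (by omega), if_neg (by omega)]; congr 1 <;> omega
      have h3 : canonD l (j' + 4) = trunc l (j' + 2) := by
        unfold canonD; rw [if_neg (by omega)]; congr 1 <;> omega
      rw [show (j' + 3 + 1 - 1 : ℕ) = j' + 3 from rfl, show (j' + 3 + 1 : ℕ) = j' + 4 from rfl,
        h1, h2, h3, card_trunc, card_trunc, if_neg (by omega), if_neg (by omega)]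
      rw [show (j' + 3 - 1 : ℕ) = j' + 2 from rfl]
      rw [show (j' + 3 : ℕ) = (j' + 2) + 1 from rfl]
      rw [Finset.sum_range_succ (f := fun j => l.rowLen j) (n := j' + 2)]
      omega

theorem canon_wt : (canon l T).wt = dvec l T := by
  ext j
  rw [wt_apply, canon_mult]

theorem canon_shape : (canon l T).shape = l := canonA_ge l T _ le_rfl

theorem canon_length : (canon l T).length = l.card + 2 * T := by
  set Q := canonK l T + l.card + 3 with hQdef
  rw [length_eq_sum _ Q (by rw [canon_steps]; omega)]
  rw [Finset.sum_congr rfl (fun j (_ : j ∈ Finset.range Q) => canon_mult l T j)]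
  have hQ : Q = (Q - 1) + 1 := by omega
  rw [hQ, dvec_sum l T (Q - 1) (by omega)]
  have htp : tp (Q - 1) l = l.card := by
    unfold tp
    rw [← card_eq_sum_rowLen l (Q - 1) (by have := colLen_le_card l; omega)]
  omega

end LIhelp

end Canonical


section Finiteness

namespace LIhelp

open YoungDiagram Finset

theorem steps_eq_of_wt {S : SSOT} {d : ℕ →₀ ℕ} (h : S.wt = d) :
    S.steps = if d = 0 then 0 else d.support.sup id + 1 := by
  have hw : ∀ j, S.mult (j + 1) = d j := fun j => by rw [← wt_apply, h]
  by_cases hs : S.steps = 0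
  · have hd0 : d = 0 := by
      ext j
      rw [← hw j, mult_of_steps_lt S (j + 1) (by omega)]
      rfl
    rw [hs, if_pos hd0]
  · have h1 : d (S.steps - 1) ≠ 0 := by
      rw [← hw]
      have := steps_mult_ne S hs
      rwa [show S.steps - 1 + 1 = S.steps by omega]
    have hd0 : d ≠ 0 := fun h' => h1 (by rw [h']; rfl)
    rw [if_neg hd0]
    have hle : S.steps - 1 ≤ d.support.sup id :=
      Finset.le_sup (f := id) (Finsupp.mem_support_iff.2 h1)
    have hub : ∀ j ∈ d.support, id j < S.steps := by
      intro j hj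
      by_contra hc
      push_neg at hc
      have : d j = 0 := by
        rw [← hw]
        exact mult_of_steps_lt S (j + 1) (by simp at hc; omega)
      exact (Finsupp.mem_support_iff.1 hj) this
    have hlt : d.support.sup id < S.steps :=
      Finset.sup_lt_iff (show (⊥ : ℕ) < S.steps by
        simp only [bot_eq_zero]; omega) |>.2 hub
    omega

theorem cardA_le_length (S : SSOT) (i : ℕ) : (S.A i).card ≤ S.length := by
  have htel := telescope S i
  have h1 : ∑ j ∈ Finset.range i, addc S (j + 1) ≤ ∑ j ∈ Finset.range i, S.mult (j + 1) :=
    Finset.sum_le_sum (fun j _ => by rw [mult_eq S (j + 1) (by omega)]; omega)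
  have h2 : ∑ j ∈ Finset.range i, S.mult (j + 1)
      ≤ ∑ j ∈ Finset.range (max i S.steps), S.mult (j + 1) :=
    Finset.sum_le_sum_of_subset (Finset.range_subset_range.2 (le_max_left _ _))
  rw [length_eq_sum S (max i S.steps) (le_max_right _ _)]
  omega

theorem cells_bound {ν : YoungDiagram} {n : ℕ} (h : ν.card ≤ n) :
    ν.cells ⊆ Finset.range (n + 1) ×ˢ Finset.range (n + 1) := by
  intro c hc
  rw [Finset.mem_product, Finset.mem_range, Finset.mem_range]
  have hm : (c.1, c.2) ∈ ν := (YoungDiagram.mem_cells c).1 hc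
  constructor
  · have h1 := YoungDiagram.mem_iff_lt_colLen.1 hm
    have h2 := ν.colLen_anti 0 c.2 (Nat.zero_le _)
    have h3 := colLen_le_card ν
    omega
  · have h1 := YoungDiagram.mem_iff_lt_rowLen.1 hm
    have h2 := ν.rowLen_anti 0 c.1 (Nat.zero_le _)
    have h3 := rowLen_le_card ν
    omega

theorem ssot_ext {S1 S2 : SSOT} (hs : S1.steps = S2.steps) (hA : S1.A = S2.A)
    (hD : S1.D = S2.D) : S1 = S2 := by
  cases S1
  cases S2
  simp only at hs hA hD
  subst hs
  subst hA
  subst hD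
  rfl

theorem ssot_finite (l : YoungDiagram) (n : ℕ) (d : ℕ →₀ ℕ) :
    Finite {S : SSOT // S.shape = l ∧ S.length = n ∧ S.wt = d} := by
  classical
  set N := d.support.sup id + 2 with hN
  set B := Finset.range (n + 1) ×ˢ Finset.range (n + 1) with hB
  have hsteps : ∀ S : SSOT, S.wt = d → S.steps < N := by
    intro S hS
    have h := steps_eq_of_wt hS
    split_ifs at h <;> omega
  have hsub : ∀ (S : SSOT), S.length = n → ∀ i : ℕ,
      (S.A i).cells ∈ B.powerset ∧ (S.D i).cells ∈ B.powerset := by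
    intro S hlen i
    constructor
    · rw [Finset.mem_powerset, hB]
      exact cells_bound (by rw [← hlen]; exact cardA_le_length S i)
    · rw [Finset.mem_powerset, hB]
      exact cells_bound (le_trans (yd_card_le_of_le (D_le_A S i))
        (by rw [← hlen]; exact cardA_le_length S i))
  apply Finite.of_injective (β := Fin N → (↥B.powerset × ↥B.powerset))
    (f := fun S => fun i =>
      ((⟨(S.1.A i).cells, (hsub S.1 S.2.2.1 i).1⟩ : ↥B.powerset),
       (⟨(S.1.D i).cells, (hsub S.1 S.2.2.1 i).2⟩ : ↥B.powerset)))
  intro S1 S2 hf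
  have hAeq : ∀ i, i < N → S1.1.A i = S2.1.A i := by
    intro i hi
    have h := congrFun hf ⟨i, hi⟩
    simp only [Prod.mk.injEq, Subtype.mk.injEq] at h
    exact yd_ext h.1
  have hDeq : ∀ i, i < N → S1.1.D i = S2.1.D i := by
    intro i hi
    have h := congrFun hf ⟨i, hi⟩
    simp only [Prod.mk.injEq, Subtype.mk.injEq] at h
    exact yd_ext h.2
  have hst : S1.1.steps = S2.1.steps := by
    rw [steps_eq_of_wt S1.2.2.2, steps_eq_of_wt S2.2.2.2]
  have hK1 : S1.1.steps < N := hsteps S1.1 S1.2.2.2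
  apply Subtype.ext
  apply ssot_ext hst
  · funext i
    rcases Nat.lt_or_ge i N with h | h
    · exact hAeq i h
    · rw [S1.1.stableA i (by omega), S2.1.stableA i (by omega), ← hst]
      exact hAeq S1.1.steps (by omega)
  · funext i
    rcases Nat.lt_or_ge i N with h | h
    · exact hDeq i h
    · rw [S1.1.stableD i (by omega), S2.1.stableD i (by omega), ← hst]
      exact hAeq S1.1.steps (by omega)

/-! ### the rank function -/

/-- a strictly dominance-monotone statistic on partitions of `m`. -/
noncomputable def rank (m : ℕ) (ν : YoungDiagram) : ℕ := ∑ p ∈ Finset.range (m + 2), tp p ν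

theorem rank_lt {μ ν : YoungDiagram} {m : ℕ} (hμ : μ.card = m) (hν : ν.card = m)
    (hdom : ∀ p, tp p ν ≤ tp p μ) (hne : ν ≠ μ) : rank m ν < rank m μ := by
  classical
  have hex : ∃ j, μ.rowLen j ≠ ν.rowLen j := by
    by_contra hc
    push_neg at hc
    exact hne (eq_of_rowLen_eq hc).symm
  set j0 := Nat.find hex with hj0
  have hspec : μ.rowLen j0 ≠ ν.rowLen j0 := Nat.find_spec hex
  have hmin : ∀ j, j < j0 → μ.rowLen j = ν.rowLen j := by
    intro j hj
    have := Nat.find_min hex hj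
    simpa using this
  have htp0 : tp j0 ν = tp j0 μ :=
    Finset.sum_congr rfl (fun j hj => (hmin j (Finset.mem_range.1 hj)).symm)
  have hlt : tp (j0 + 1) ν < tp (j0 + 1) μ := by
    have h := hdom (j0 + 1)
    unfold tp at h htp0 ⊢
    rw [Finset.sum_range_succ, Finset.sum_range_succ] at h ⊢
    omega
  have hj0b : j0 + 1 < m + 2 := by
    rcases Nat.eq_zero_or_pos (μ.rowLen j0) with h | h
    · have hν0 : ν.rowLen j0 ≠ 0 := by omega
      have := lt_of_lt_of_le (row_lt_colLen hν0) (colLen_le_card ν)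
      omega
    · have hμ0 : μ.rowLen j0 ≠ 0 := by omega
      have := lt_of_lt_of_le (row_lt_colLen hμ0) (colLen_le_card μ)
      omega
  unfold rank
  apply Finset.sum_lt_sum
  · intro p _
    exact hdom p
  · exact ⟨j0 + 1, Finset.mem_range.2 hj0b, hlt⟩

end LIhelp

end Finiteness

/-- **Linear independence.**  For every `m ≥ 0` and every `n ∈ N(m)`, the family of
homogeneous SSOT functions `(ss_{λ,n} : λ ⊢ m)` is linearly independent over `ℂ`. -/
theorem ssotFun_linearIndependent (m n : ℕ) (h1 : m ≤ n) (h2 : n % 2 = m % 2) :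
    LinearIndependent ℂ (fun l : {l : YoungDiagram // l.card = m} => ssotFunC l.1 n) := by
  classical
  open LIhelp in
  set T := (n - m) / 2 with hTdef
  have hnm : n = m + 2 * T := by omega
  rw [linearIndependent_iff']
  intro s g hsum i hi
  by_contra hgi
  set s' := s.filter (fun j => g j ≠ 0) with hs'
  have hne : s'.Nonempty := ⟨i, Finset.mem_filter.2 ⟨hi, hgi⟩⟩
  obtain ⟨lam, hlam, hmax⟩ := Finset.exists_max_image s' (fun j => LIhelp.rank m j.1) hne
  have hlam' := Finset.mem_filter.1 hlam
  have happ := congrArg (fun f => MvPowerSeries.coeff (LIhelp.dvec lam.1 T) f) hsum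
  simp only [map_sum, map_smul, map_zero] at happ
  have hterm : ∀ j ∈ s, j ≠ lam →
      g j • (MvPowerSeries.coeff (LIhelp.dvec lam.1 T) (ssotFunC j.1 n)) = 0 := by
    intro j hj hjne
    by_cases hgj : g j = 0
    · rw [hgj, zero_smul]
    · have hcoeff : MvPowerSeries.coeff (LIhelp.dvec lam.1 T) (ssotFunC j.1 n) = 0 := by
        have hrfl : MvPowerSeries.coeff (LIhelp.dvec lam.1 T) (ssotFunC j.1 n)
            = ((Nat.card {S : SSOT // S.shape = j.1 ∧ S.length = n ∧
                S.wt = LIhelp.dvec lam.1 T} : ℂ)) := rfl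
        rw [hrfl]
        have hempty : IsEmpty {S : SSOT // S.shape = j.1 ∧ S.length = n ∧
            S.wt = LIhelp.dvec lam.1 T} := by
          refine ⟨fun Sx => ?_⟩
          obtain ⟨S, hsh, hlen, hwt⟩ := Sx
          have hdom := LIhelp.dom_of_ssot lam.1 T S hwt (by rw [hsh, j.2, lam.2])
          rw [hsh] at hdom
          have hjne' : lam.1 ≠ j.1 := fun he => hjne (Subtype.ext he.symm)
          have hlt := LIhelp.rank_lt (m := m) j.2 lam.2 hdom hjne'
          have hle := hmax j (Finset.mem_filter.2 ⟨hj, hgj⟩)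
          omega
        rw [@Nat.card_of_isEmpty _ hempty]
        norm_num
      rw [hcoeff, smul_zero]
  rw [Finset.sum_eq_single_of_mem lam hlam'.1 hterm] at happ
  have hdiag : MvPowerSeries.coeff (LIhelp.dvec lam.1 T) (ssotFunC lam.1 n) ≠ 0 := by
    have hrfl : MvPowerSeries.coeff (LIhelp.dvec lam.1 T) (ssotFunC lam.1 n)
        = ((Nat.card {S : SSOT // S.shape = lam.1 ∧ S.length = n ∧
            S.wt = LIhelp.dvec lam.1 T} : ℂ)) := rfl
    rw [hrfl]
    have hfin : Finite {S : SSOT // S.shape = lam.1 ∧ S.length = n ∧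
        S.wt = LIhelp.dvec lam.1 T} := LIhelp.ssot_finite lam.1 n (LIhelp.dvec lam.1 T)
    have hnonempty : Nonempty {S : SSOT // S.shape = lam.1 ∧ S.length = n ∧
        S.wt = LIhelp.dvec lam.1 T} :=
      ⟨⟨LIhelp.canon lam.1 T, LIhelp.canon_shape lam.1 T,
        by rw [LIhelp.canon_length, lam.2, hnm], LIhelp.canon_wt lam.1 T⟩⟩
    have hpos := @Nat.card_pos _ hnonempty hfin
    exact Nat.cast_ne_zero.2 (by omega)
  exact hdiag ((smul_eq_zero.1 happ).resolve_left hlam'.2)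
end

section
/- For every partition λ and every n ∈ N(λ), writing n = |λ| + 2r, the partition λ̄ = (λ_1 + r, λ_2 + r, λ_3, …, λ_l) is the maximum element of V^n(λ) with respect to the dominance order: λ̄ ∈ V^n(λ) and ν ≤ λ̄ for every ν ∈ V^n(λ). -/
open scoped BigOperators Classical

namespace BarAux

lemma rowLen_eq_of (μ : YoungDiagram) (i k : ℕ) (h : ∀ j, (i, j) ∈ μ ↔ j < k) :
    μ.rowLen i = k := by
  rcases Nat.lt_trichotomy (μ.rowLen i) k with h' | h' | h'
  · have := (h (μ.rowLen i)).mpr h'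
    rw [YoungDiagram.mem_iff_lt_rowLen] at this; omega
  · exact h'
  · have := (h k).mp (YoungDiagram.mem_iff_lt_rowLen.mpr h')
    omega

lemma mem_barYD (l : YoungDiagram) (r i j : ℕ) :
    (i, j) ∈ barYD l r ↔
      j < (if i = 0 then l.rowLen 0 + r else if i = 1 then l.rowLen 1 + r else l.rowLen i) := by
  have h01 : l.rowLen 1 ≤ l.rowLen 0 := l.rowLen_anti 0 1 (by omega)
  show (i, j) ∈ (barYD l r).cells ↔ _
  simp only [barYD, Finset.mem_union, Finset.mem_filter, Finset.mem_product,
    Finset.mem_singleton, Finset.mem_range, YoungDiagram.mem_cells,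
    YoungDiagram.mem_iff_lt_rowLen]
  split_ifs with h0 h1
  · subst h0; constructor
    · rintro ((⟨h, h2⟩ | ⟨_, h⟩) | ⟨h, _⟩) <;> omega
    · intro h; exact Or.inl (Or.inr ⟨rfl, h⟩)
  · subst h1; constructor
    · rintro ((⟨h, h2⟩ | ⟨h, _⟩) | ⟨_, h⟩) <;> omega
    · intro h; exact Or.inr ⟨rfl, h⟩
  · constructor
    · rintro ((⟨h, h2⟩ | ⟨h, _⟩) | ⟨h, _⟩) <;> omega
    · intro h; exact Or.inl (Or.inl ⟨h, by omega⟩)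

lemma rowLen_barYD (l : YoungDiagram) (r i : ℕ) :
    (barYD l r).rowLen i =
      if i = 0 then l.rowLen 0 + r else if i = 1 then l.rowLen 1 + r else l.rowLen i :=
  rowLen_eq_of _ _ _ (fun j => mem_barYD l r i j)

lemma rowLen_zero_of (μ : YoungDiagram) (i : ℕ) (h : μ.colLen 0 ≤ i) : μ.rowLen i = 0 := by
  by_contra h'
  have : (i, 0) ∈ μ := YoungDiagram.mem_iff_lt_rowLen.mpr (Nat.pos_of_ne_zero h')
  rw [YoungDiagram.mem_iff_lt_colLen] at this; omega

lemma card_eq_sum (μ : YoungDiagram) (K : ℕ) (h : ∀ i, K ≤ i → μ.rowLen i = 0) :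
    μ.card = ∑ i ∈ Finset.range K, μ.rowLen i := by
  have hc : μ.cells = (Finset.range K).biUnion (fun i => μ.row i) := by
    ext ⟨i, j⟩
    simp only [Finset.mem_biUnion, Finset.mem_range, YoungDiagram.mem_row_iff,
      YoungDiagram.mem_cells]
    constructor
    · intro hm
      refine ⟨i, ?_, hm, rfl⟩
      by_contra hK
      have h0 := h i (le_of_not_gt hK)
      rw [YoungDiagram.mem_iff_lt_rowLen, h0] at hm; omega
    · rintro ⟨i', _, hm, rfl⟩; exact hm
  rw [YoungDiagram.card, hc, Finset.card_biUnion]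
  · exact Finset.sum_congr rfl fun i _ => (μ.rowLen_eq_card).symm
  · intro a _ b _ hab
    rw [Function.onFun, Finset.disjoint_left]
    intro s hs hs'
    rw [YoungDiagram.mem_row_iff] at hs hs'
    exact hab (hs.2.symm.trans hs'.2)

lemma sum_rowLen_barYD (l : YoungDiagram) (r K : ℕ) (hK : 2 ≤ K) :
    ∑ i ∈ Finset.range K, (barYD l r).rowLen i
      = (∑ i ∈ Finset.range K, l.rowLen i) + 2 * r := by
  have : ∀ i, (barYD l r).rowLen i = l.rowLen i + (if i < 2 then r else 0) := by
    intro i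
    rw [rowLen_barYD]
    match i with
    | 0 => norm_num
    | 1 => norm_num
    | (m + 2) => simp
  rw [Finset.sum_congr rfl (fun i _ => this i), Finset.sum_add_distrib]
  have h2 : (∑ i ∈ Finset.range K, if i < 2 then r else 0) = 2 * r := by
    rw [← Finset.sum_filter]
    have : (Finset.range K).filter (· < 2) = Finset.range 2 := by
      ext x; simp only [Finset.mem_filter, Finset.mem_range]; omega
    rw [this]; simp [Finset.sum_const, two_mul]
  omega

lemma card_barYD (l : YoungDiagram) (r : ℕ) : (barYD l r).card = l.card + 2 * r := by
  set K := l.colLen 0 + 2 with hKdef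
  have hz : ∀ i, K ≤ i → (barYD l r).rowLen i = 0 := by
    intro i hi
    have h0 : l.rowLen i = 0 := rowLen_zero_of l i (by omega)
    rw [rowLen_barYD, if_neg (by omega), if_neg (by omega), h0]
  have hzl : ∀ i, K ≤ i → l.rowLen i = 0 := fun i hi => rowLen_zero_of l i (by omega)
  rw [card_eq_sum _ K hz, card_eq_sum l K hzl, sum_rowLen_barYD l r K (by omega)]

lemma barYD_zero (l : YoungDiagram) : barYD l 0 = l := by
  ext ⟨i, j⟩
  rw [YoungDiagram.mem_cells, YoungDiagram.mem_cells, mem_barYD,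
    YoungDiagram.mem_iff_lt_rowLen]
  split_ifs with h0 h1 <;> subst_vars <;> omega

lemma barYD_le_succ (l : YoungDiagram) (k : ℕ) : barYD l k ≤ barYD l (k + 1) := by
  intro c hc
  obtain ⟨i, j⟩ := c
  rw [mem_barYD] at hc ⊢
  split_ifs at hc ⊢ <;> omega

lemma vreach_barYD (l : YoungDiagram) (r : ℕ) : VReach l (barYD l r) := by
  induction r with
  | zero => rw [barYD_zero]; exact VReach.refl l
  | succ k ih =>
    refine VReach.step ih ⟨barYD_le_succ l k, ?_⟩ ?_
    · intro i j₁ j₂ h₁ h₁' h₂ h₂'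
      rw [mem_barYD] at h₁ h₂ h₁' h₂'
      split_ifs at h₁ h₂ h₁' h₂' <;> omega
    · rw [card_barYD, card_barYD]
      exact ⟨1, by omega⟩

lemma le_rowLen_mono {μ ν : YoungDiagram} (h : μ ≤ ν) (i : ℕ) : μ.rowLen i ≤ ν.rowLen i := by
  by_contra h'
  have hm : (i, ν.rowLen i) ∈ μ := YoungDiagram.mem_iff_lt_rowLen.mpr (by omega)
  have := h hm
  rw [YoungDiagram.mem_iff_lt_rowLen] at this; omega

lemma vreach_le {μ ν : YoungDiagram} (h : VReach μ ν) : μ ≤ ν := by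
  induction h with
  | refl => exact le_rfl
  | step _ hstrip _ ih => exact le_trans ih hstrip.1

lemma vreach_row0 {μ ν : YoungDiagram} (h : VReach μ ν) :
    2 * ν.rowLen 0 + μ.card ≤ 2 * μ.rowLen 0 + ν.card := by
  induction h with
  | refl => omega
  | @step ν' ρ _ hstrip heven ih =>
    have hle : ν' ≤ ρ := hstrip.1
    have hcard : ν'.card ≤ ρ.card := Finset.card_le_card hle
    have hrow : ν'.rowLen 0 ≤ ρ.rowLen 0 := le_rowLen_mono hle 0
    rcases Nat.eq_or_lt_of_le hrow with heq | hlt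
    · omega
    · set a := ν'.rowLen 0 with ha
      have hmem : (0, a) ∈ ρ ∧ (0, a) ∉ ν' := by
        constructor
        · exact YoungDiagram.mem_iff_lt_rowLen.mpr (by omega)
        · rw [YoungDiagram.mem_iff_lt_rowLen]; omega
      have hrow1 : ρ.rowLen 0 ≤ a + 1 := by
        by_contra h'
        have hmem2 : (0, a + 1) ∈ ρ ∧ (0, a + 1) ∉ ν' := by
          constructor
          · exact YoungDiagram.mem_iff_lt_rowLen.mpr (by omega)
          · rw [YoungDiagram.mem_iff_lt_rowLen]; omega
        have := hstrip.2 0 a (a + 1) hmem.1 hmem.2 hmem2.1 hmem2.2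
        omega
      have hlt2 : ν'.card < ρ.card := by
        apply Finset.card_lt_card
        rw [Finset.ssubset_iff_of_subset hle]
        exact ⟨(0, a), hmem.1, hmem.2⟩
      obtain ⟨t, ht⟩ := heven
      omega

end BarAux

/-- For every partition `λ` and every `n = |λ| + 2r ∈ N(λ)`, the partition
`λ̄ = (λ₁ + r, λ₂ + r, λ₃, …, λ_l)` is the maximum element of `V^n(λ)` with respect to the
dominance order. -/
theorem barYD_max_of_V (l : YoungDiagram) (r n : ℕ) (hn : n = l.card + 2 * r) :
    VReach l (barYD l r) ∧ (barYD l r).card = n ∧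
      ∀ ν : YoungDiagram, VReach l ν → ν.card = n → Dom (barYD l r) ν := by
  subst hn
  refine ⟨BarAux.vreach_barYD l r, BarAux.card_barYD l r, ?_⟩
  intro ν hv hcard i
  have hle : l ≤ ν := BarAux.vreach_le hv
  match i with
  | 0 => simp
  | 1 =>
    have h0 := BarAux.vreach_row0 hv
    have hb : (barYD l r).rowLen 0 = l.rowLen 0 + r := by
      rw [BarAux.rowLen_barYD]; simp
    simp only [Finset.sum_range_one]
    omega
  | (m + 2) =>
    set i := m + 2 with hidef
    set K := i + l.colLen 0 + ν.colLen 0 with hKdef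
    have hiK : i ≤ K := by omega
    have hzl : ∀ j, K ≤ j → l.rowLen j = 0 := fun j hj => BarAux.rowLen_zero_of l j (by omega)
    have hzν : ∀ j, K ≤ j → ν.rowLen j = 0 := fun j hj => BarAux.rowLen_zero_of ν j (by omega)
    have hcl : l.card = ∑ j ∈ Finset.range K, l.rowLen j := BarAux.card_eq_sum l K hzl
    have hcν : ν.card = ∑ j ∈ Finset.range K, ν.rowLen j := BarAux.card_eq_sum ν K hzν
    have hsplitl : (∑ j ∈ Finset.Ico 0 i, l.rowLen j) + ∑ j ∈ Finset.Ico i K, l.rowLen j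
        = ∑ j ∈ Finset.Ico 0 K, l.rowLen j :=
      Finset.sum_Ico_consecutive _ (Nat.zero_le i) hiK
    have hsplitν : (∑ j ∈ Finset.Ico 0 i, ν.rowLen j) + ∑ j ∈ Finset.Ico i K, ν.rowLen j
        = ∑ j ∈ Finset.Ico 0 K, ν.rowLen j :=
      Finset.sum_Ico_consecutive _ (Nat.zero_le i) hiK
    rw [← Finset.range_eq_Ico] at hsplitl hsplitν
    rw [Finset.range_eq_Ico] at hsplitl hsplitν
    have htail : (∑ j ∈ Finset.Ico i K, l.rowLen j) ≤ ∑ j ∈ Finset.Ico i K, ν.rowLen j :=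
      Finset.sum_le_sum fun j _ => BarAux.le_rowLen_mono hle j
    have hbar : ∑ j ∈ Finset.range i, (barYD l r).rowLen j
        = (∑ j ∈ Finset.range i, l.rowLen j) + 2 * r :=
      BarAux.sum_rowLen_barYD l r i (by omega)
    rw [Finset.range_eq_Ico] at hcl hcν hbar ⊢
    omega
end
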